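/- Under a conformal rescaling ĝ = e^{2Υ} g in dimension 3, for a curve with unit tangent T (w.r.t. g) and unit normal ν, setting T̂ = e^{−Υ}T, ν̂ = e^{−Υ}ν, one has ĝ(∇̂_{ẋ} ν̂, T̂ ×̂ ν̂) = g(∇_{ẋ} ν, T × ν), where ∇̂ is the Levi-Civita connection of ĝ and ×̂ the cross product of ĝ; hence the total torsion integrand is conformally invariant. -/
import Mathlib


noncomputable section

/-- Euclidean inner product on ℝ³. -/
def dotR (v w : Fin 3 → ℝ) : ℝ := ∑ i, v i * w i

/-- Cross product on ℝ³. -/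
def crossR (v w : Fin 3 → ℝ) : Fin 3 → ℝ :=
  ![v 1 * w 2 - v 2 * w 1, v 2 * w 0 - v 0 * w 2, v 0 * w 1 - v 1 * w 0]

/-- Conformal invariance of the total-torsion integrand.  Here `x` is a curve in ℝ³
(viewed as a Riemannian 3-manifold with the flat metric `dotR`), `T` and `ν` are
unit tangent/normal fields along `x`, `Υ` the conformal factor and `G = grad Υ`.
The hatted connection is `∇̂_X Y = ∇_X Y + (XΥ)Y + (YΥ)X − g(X,Y) grad Υ`, and for
`ĝ = e^{2Υ}g` the hatted cross product satisfies `a ×̂ b = e^{Υ} (a × b)`. -/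
theorem stmt15 (x T ν : ℝ → Fin 3 → ℝ) (Υ : (Fin 3 → ℝ) → ℝ) (G : (Fin 3 → ℝ) → Fin 3 → ℝ)
    (hx : Differentiable ℝ x) (hν : Differentiable ℝ ν)
    (hT : ∀ t, dotR (T t) (T t) = 1) (hνν : ∀ t, dotR (ν t) (ν t) = 1)
    (hTν : ∀ t, dotR (T t) (ν t) = 0) (hνx : ∀ t, dotR (ν t) (deriv x t) = 0)
    (htan : ∀ t, ∃ c : ℝ, 0 < c ∧ deriv x t = c • T t)
    (hchain : ∀ t, HasDerivAt (fun s => Υ (x s)) (dotR (G (x t)) (deriv x t)) t)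
    (t : ℝ) :
    Real.exp (2 * Υ (x t)) *
      dotR
        (fun i =>
          deriv (fun s => Real.exp (-(Υ (x s))) • ν s) t i
          + dotR (G (x t)) (deriv x t) * (Real.exp (-(Υ (x t))) • ν t) i
          + dotR (G (x t)) (Real.exp (-(Υ (x t))) • ν t) * deriv x t i
          - dotR (deriv x t) (Real.exp (-(Υ (x t))) • ν t) * G (x t) i)
        (Real.exp (Υ (x t)) •
          crossR (Real.exp (-(Υ (x t))) • T t) (Real.exp (-(Υ (x t))) • ν t))
    = dotR (deriv ν t) (crossR (T t) (ν t)) := by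
  obtain ⟨c, hc, hcx⟩ := htan t
  have hd := (hchain t).neg
  have hexp : HasDerivAt (fun s => Real.exp (-(Υ (x s))))
      (Real.exp (-(Υ (x t))) * -(dotR (G (x t)) (deriv x t))) t := hd.exp
  have hsmul := hexp.smul ((hν t).hasDerivAt)
  have hder : deriv (fun s => Real.exp (-(Υ (x s))) • ν s) t
      = Real.exp (-(Υ (x t))) • deriv ν t
        + (Real.exp (-(Υ (x t))) * -(dotR (G (x t)) (deriv x t))) • ν t := hsmul.deriv
  have h0 : dotR (deriv x t) (Real.exp (-(Υ (x t))) • ν t) = 0 := by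
    have := hνx t
    simp only [dotR, Fin.sum_univ_three, Pi.smul_apply, smul_eq_mul] at this ⊢
    linear_combination Real.exp (-(Υ (x t))) * this
  simp only [hder, h0, zero_mul, sub_zero]
  have hTν' := hTν t
  simp only [dotR, crossR, Fin.sum_univ_three] at hTν' ⊢
  rw [hcx]
  simp only [Pi.add_apply, Pi.smul_apply, smul_eq_mul, Matrix.cons_val_zero,
    Matrix.cons_val_one, Matrix.head_cons, Matrix.cons_val_two, Matrix.tail_cons,
    Real.exp_neg, two_mul, Real.exp_add]
  field_simp
  ring
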